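/- Let $\overline{\alpha}_1, \dots, \overline{\alpha}_m : \mathbb{Z}^r \to \mathbb{R}$ be linear maps and let $0 < \varepsilon \leq 1$. Set $C = \log \varepsilon < 0$ (if $\varepsilon < 1$) or $C=0$. Then there exists $0 < \varepsilon' \leq 1$ with the following property: every $s \in \mathbb{Z}^r$ satisfying $\overline{\alpha}_i(s) \leq \log\varepsilon'$ for $i \in J$ and $\overline{\alpha}_i(s) \leq 0$ for $i \notin J$ can be written as $s = s_1 + s_2$ where $\overline{\alpha}_i(s_1) \leq \log\varepsilon$ for $i \in J$, $\overline{\alpha}_i(s_1) = 0$ for $i \notin J$, and $\overline{\alpha}_i(s_2) \leq 0$ for all $i$ — provided the sublattice $\{s : \overline{\alpha}_i(s) = 0 \text{ for } i \notin J\}$ together with $\{s: \overline{\alpha}_i(s)=0 \text{ for } i \in J\}$ spans a finite-index subgroup of $\mathbb{Z}^r$. -/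
import Mathlib


/-- logarithmic abstraction of Lemma 1.6(1): Given linear maps
`ᾱ_i : ℤ^r → ℝ`, `0 < ε ≤ 1`, and a subset `J` such that the subgroups
`A = {s : ᾱ_i(s) = 0, i ∉ J}` and `B = {s : ᾱ_i(s) = 0, i ∈ J}` together span a
finite-index subgroup, there exists `0 < ε' ≤ 1` such that every `s` with
`ᾱ_i(s) ≤ log ε'` for `i ∈ J` and `ᾱ_i(s) ≤ 0` for `i ∉ J` decomposes as
`s = s₁ + s₂` with `ᾱ_i(s₁) ≤ log ε` for `i ∈ J`, `ᾱ_i(s₁) = 0` for `i ∉ J`,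
and `ᾱ_i(s₂) ≤ 0` for all `i`. -/
theorem statement6 (r m : ℕ) (α : Fin m → (Fin r → ℤ) →+ ℝ)
    (ε : ℝ) (hε : 0 < ε) (hε1 : ε ≤ 1) (J : Set (Fin m))
    (A B : AddSubgroup (Fin r → ℤ))
    (hA : A = ⨅ i ∈ Jᶜ, (α i).ker) (hB : B = ⨅ i ∈ J, (α i).ker)
    (hfin : (A ⊔ B).FiniteIndex) :
    ∃ ε' : ℝ, 0 < ε' ∧ ε' ≤ 1 ∧ ∀ s : Fin r → ℤ,
      (∀ i ∈ J, α i s ≤ Real.log ε') → (∀ i ∉ J, α i s ≤ 0) →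
      ∃ s₁ s₂ : Fin r → ℤ, s = s₁ + s₂ ∧
        (∀ i ∈ J, α i s₁ ≤ Real.log ε) ∧ (∀ i ∉ J, α i s₁ = 0) ∧
        (∀ i, α i s₂ ≤ 0) := by
  classical
  set H : AddSubgroup (Fin r → ℤ) := A ⊔ B with hH
  haveI : H.FiniteIndex := hfin
  haveI : Finite ((Fin r → ℤ) ⧸ H) := inferInstance
  haveI := Fintype.ofFinite ((Fin r → ℤ) ⧸ H)
  -- predicate selecting a "good" representative of a coset
  set P : (Fin r → ℤ) → ((Fin r → ℤ) ⧸ H) → Prop :=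
    fun t q => ((t : (Fin r → ℤ) ⧸ H) = q) ∧ ∀ i ∈ J, α i t ≤ 0 with hP
  set T : ((Fin r → ℤ) ⧸ H) → (Fin r → ℤ) :=
    fun q => if h : ∃ t, P t q then h.choose else 0 with hT
  have hTspec : ∀ q, (∃ t, P t q) → P (T q) q := by
    intro q hq
    rw [hT]
    dsimp only
    rw [dif_pos hq]
    exact hq.choose_spec
  -- the constant M
  set Mset : Finset ℝ := insert 0 ((Finset.univ : Finset ((((Fin r → ℤ) ⧸ H)) × Fin m)).image
    fun p => -(α p.2 (T p.1))) with hMset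
  have hMne : Mset.Nonempty := ⟨0, Finset.mem_insert_self _ _⟩
  set M : ℝ := Mset.max' hMne with hM
  have hM0 : 0 ≤ M := Finset.le_max' _ _ (Finset.mem_insert_self _ _)
  have hMb : ∀ q i, -(α i (T q)) ≤ M := by
    intro q i
    apply Finset.le_max'
    rw [hMset]
    exact Finset.mem_insert_of_mem (Finset.mem_image.2 ⟨(q, i), Finset.mem_univ _, rfl⟩)
  have hε'pos : 0 < ε * Real.exp (-M) := by positivity
  have hε'le1 : ε * Real.exp (-M) ≤ 1 := by
    have h1 : Real.exp (-M) ≤ 1 := Real.exp_le_one_iff.mpr (by linarith)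
    nlinarith [Real.exp_pos (-M)]
  have hlog : Real.log (ε * Real.exp (-M)) = Real.log ε - M := by
    rw [Real.log_mul hε.ne' (Real.exp_pos _).ne', Real.log_exp]
    ring
  refine ⟨ε * Real.exp (-M), hε'pos, hε'le1, ?_⟩
  intro s hs1 hs2
  have hlogε'0 : Real.log (ε * Real.exp (-M)) ≤ 0 := Real.log_nonpos hε'pos.le hε'le1
  set q : (Fin r → ℤ) ⧸ H := (s : (Fin r → ℤ) ⧸ H) with hq
  have hex : ∃ t, P t q := ⟨s, rfl, fun i hi => le_trans (hs1 i hi) hlogε'0⟩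
  obtain ⟨hTq1, hTq2⟩ := hTspec q hex
  -- s - T q ∈ H = A ⊔ B
  have hmem : s - T q ∈ H := by
    have : ((s : (Fin r → ℤ) ⧸ H)) = ((T q : (Fin r → ℤ) ⧸ H)) := hTq1.symm
    exact (QuotientAddGroup.eq_iff_sub_mem).mp this.symm |> fun h => by
      have := H.neg_mem h
      rwa [neg_sub] at this
  rw [hH] at hmem
  obtain ⟨a, ha, b, hb, hab⟩ := (AddSubgroup.mem_sup).1 hmem
  -- membership facts
  have haA : ∀ i ∉ J, α i a = 0 := by
    intro i hi
    rw [hA] at ha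
    have h1 := (AddSubgroup.mem_iInf.mp ha) i
    have h2 := (AddSubgroup.mem_iInf.mp h1) hi
    exact h2
  have hbB : ∀ i ∈ J, α i b = 0 := by
    intro i hi
    rw [hB] at hb
    have h1 := (AddSubgroup.mem_iInf.mp hb) i
    have h2 := (AddSubgroup.mem_iInf.mp h1) hi
    exact h2
  refine ⟨a, b + T q, ?_, ?_, haA, ?_⟩
  · rw [← add_assoc, hab]; abel
  · intro i hi
    have key : α i a + α i b = α i s - α i (T q) := by
      rw [← map_add, hab, map_sub]
    have h1 := hs1 i hi
    have h2 := hbB i hi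
    have h3 := hMb q i
    rw [hlog] at h1
    linarith
  · intro i
    rw [map_add]
    by_cases hi : i ∈ J
    · have := hTq2 i hi
      have := hbB i hi
      linarith
    · have key : α i a + α i b = α i s - α i (T q) := by
        rw [← map_add, hab, map_sub]
      have h1 := hs2 i hi
      have h2 := haA i hi
      linarith
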